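/- There is a computable (indeed polynomial-time computable) function e mapping every CTL formula φ to a CTL formula e(φ) containing at most one propositional variable, such that e(φ) is satisfiable if and only if φ is satisfiable. -/

import Mathlib

/-- CTL formulas: variables, falsehood, implication, AX, ∀U, ∃U. -/
inductive CTL : Type where
  | var : ℕ → CTL
  | bot : CTL
  | imp : CTL → CTL → CTL
  | ax : CTL → CTL
  | au : CTL → CTL → CTL
  | eu : CTL → CTL → CTL

namespace CTL
def neg (φ : CTL) : CTL := imp φ bot
def top : CTL := imp bot bot
def conj (φ ψ : CTL) : CTL := neg (imp φ (neg ψ))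
def iffc (φ ψ : CTL) : CTL := conj (imp φ ψ) (imp ψ φ)
def ex (φ : CTL) : CTL := neg (ax (neg φ))
def ef (φ : CTL) : CTL := eu top φ
def ag (φ : CTL) : CTL := neg (ef (neg φ))
end CTL

/-- Serial Kripke models. -/
structure Kripke (S : Type) where
  rel : S → S → Prop
  serial : ∀ s, ∃ t, rel s t
  val : ℕ → S → Prop

def isPath {S : Type} (M : Kripke S) (π : ℕ → S) : Prop :=
  ∀ i, M.rel (π i) (π (i + 1))

/-- CTL satisfaction over serial Kripke models. -/
def sat {S : Type} (M : Kripke S) : CTL → S → Prop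
  | .var n, s => M.val n s
  | .bot, _ => False
  | .imp a b, s => sat M a s → sat M b s
  | .ax a, s => ∀ t, M.rel s t → sat M a t
  | .au a b, s => ∀ π, isPath M π → π 0 = s →
      ∃ i, sat M b (π i) ∧ ∀ j, j < i → sat M a (π j)
  | .eu a b, s => ∃ π, isPath M π ∧ π 0 = s ∧
      ∃ i, sat M b (π i) ∧ ∀ j, j < i → sat M a (π j)

def satisfiable (φ : CTL) : Prop := ∃ (S : Type) (M : Kripke S) (s : S), sat M φ s
def valid (φ : CTL) : Prop := ∀ (S : Type) (M : Kripke S) (s : S), sat M φ s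

/-- Variable q occurs in a formula. -/
def occurs (q : ℕ) : CTL → Prop
  | .var n => n = q
  | .bot => False
  | .imp a b => occurs q a ∨ occurs q b
  | .ax a => occurs q a
  | .au a b => occurs q a ∨ occurs q b
  | .eu a b => occurs q a ∨ occurs q b

/-- Uniform substitution of ψ for variable p. -/
def subst (p : ℕ) (ψ : CTL) : CTL → CTL
  | .var n => if n = p then ψ else .var n
  | .bot => .bot
  | .imp a b => .imp (subst p ψ a) (subst p ψ b)
  | .ax a => .ax (subst p ψ a)
  | .au a b => .au (subst p ψ a) (subst p ψ b)
  | .eu a b => .eu (subst p ψ a) (subst p ψ b)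

/-- The relativizing translation ·' with guard variable q. -/
def relTr (q : ℕ) : CTL → CTL
  | .var n => .var n
  | .bot => .bot
  | .imp a b => .imp (relTr q a) (relTr q b)
  | .ax a => .ax (.imp (.var q) (relTr q a))
  | .au a b => .au (relTr q a) (CTL.conj (.var q) (relTr q b))
  | .eu a b => .eu (relTr q a) (CTL.conj (.var q) (relTr q b))

/-- Θ = q ∧ AG(EX q ↔ q). -/
def Theta (q : ℕ) : CTL :=
  CTL.conj (.var q) (CTL.ag (CTL.iffc (CTL.ex (.var q)) (.var q)))

/-- Transition relation of the chain model M_m: state 0 = root r_m, state 1 = b^m,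
state i+1 = a_i for 1 ≤ i ≤ 2m; self-loops everywhere. -/
def chainRel (m : ℕ) (s t : Fin (2 * m + 2)) : Prop :=
  (s.val = 0 ∧ (t.val = 1 ∨ t.val = 2)) ∨
  (2 ≤ s.val ∧ s.val ≤ 2 * m ∧ t.val = s.val + 1) ∨
  t = s

/-- p is true exactly at the root and the even-indexed chain states a_{2j}. -/
def chainVal (m : ℕ) (s : Fin (2 * m + 2)) : Prop :=
  s.val = 0 ∨ (3 ≤ s.val ∧ s.val % 2 = 1)

def chainModel (m : ℕ) : Kripke (Fin (2 * m + 2)) where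
  rel := chainRel m
  serial := fun s => ⟨s, Or.inr (Or.inr rfl)⟩
  val := fun n s => n = 0 ∧ chainVal m s

def chainRoot (m : ℕ) : Fin (2 * m + 2) := ⟨0, by omega⟩

/-- χ₀ = ∀□p, χ_{k+1} = p ∧ EX(¬p ∧ EX χ_k); the single variable p is var 0. -/
def chi : ℕ → CTL
  | 0 => CTL.ag (.var 0)
  | k + 1 => CTL.conj (.var 0) (CTL.ex (CTL.conj (CTL.neg (.var 0)) (CTL.ex (chi k))))

/-- A_m = χ_m ∧ EX AG ¬p. -/
def Aform (m : ℕ) : CTL := CTL.conj (chi m) (CTL.ex (CTL.ag (CTL.neg (.var 0))))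

/-- B_m = EX A_m. -/
def Bform (m : ℕ) : CTL := CTL.ex (Aform m)

/-- The substitution σ : pᵢ ↦ Bᵢ for 1 ≤ i ≤ n+1. -/
def sigmaSub (n : ℕ) : CTL → CTL
  | .var i => if 1 ≤ i ∧ i ≤ n + 1 then Bform i else .var i
  | .bot => .bot
  | .imp a b => .imp (sigmaSub n a) (sigmaSub n b)
  | .ax a => .ax (sigmaSub n a)
  | .au a b => .au (sigmaSub n a) (sigmaSub n b)
  | .eu a b => .eu (sigmaSub n a) (sigmaSub n b)

/-- An injective coding of CTL formulas by natural numbers. -/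
def encodeCTL : CTL → ℕ
  | .var n => Nat.pair 0 n
  | .bot => Nat.pair 1 0
  | .imp a b => Nat.pair 2 (Nat.pair (encodeCTL a) (encodeCTL b))
  | .ax a => Nat.pair 3 (encodeCTL a)
  | .au a b => Nat.pair 4 (Nat.pair (encodeCTL a) (encodeCTL b))
  | .eu a b => Nat.pair 5 (Nat.pair (encodeCTL a) (encodeCTL b))

/-!
The embedding is `σ(Θ ∧ φ')`. Here `φ'` relativizes `φ` to a fresh guard variable `q`, and
`Θ = q ∧ AG(EX q ↔ q)` makes the `q`-states reachable from the root a serial submodel in which `φ`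
holds iff `φ'` holds in the whole model; so `Θ ∧ φ'` is satisfiable iff `φ` is. The substitution
`σ` replaces the variables by the one-variable formulas `B_m`, and a model of `σ(Θ ∧ φ')`
revalued by the `B_m` is a model of `Θ ∧ φ'`. Conversely, below each state `s` of a model of `φ`
hang, for every `m` whose variable holds at `s`, a chain whose head is the only state satisfying
`A_m`: then `B_m` holds at `s` iff that variable does, no chain state satisfies any `B_m`, and the
guard region of the revalued model is the original model.
Both translations are structural recursions, hence primitive recursive on codes.
-/

variable {S S₁ S₂ : Type}

section Semantics

variable {M : Kripke S} {a b : CTL} {s : S}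

theorem sat_neg : sat M (CTL.neg a) s ↔ ¬ sat M a s := Iff.rfl

theorem sat_conj : sat M (CTL.conj a b) s ↔ sat M a s ∧ sat M b s := by
  simp only [CTL.conj, CTL.neg, sat]
  tauto

theorem sat_iffc : sat M (CTL.iffc a b) s ↔ (sat M a s ↔ sat M b s) := by
  simp only [CTL.iffc, sat_conj, sat]
  tauto

theorem sat_ex : sat M (CTL.ex a) s ↔ ∃ t, M.rel s t ∧ sat M a t := by
  simp [CTL.ex, CTL.neg, sat]

theorem isPath_cons {π : ℕ → S} (hπ : isPath M π) (h : M.rel s (π 0)) :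
    isPath M (fun j => if j = 0 then s else π (j - 1)) := by
  rintro (_ | j)
  · simpa using h
  · simpa using hπ j

theorem isPath_append {π ρ : ℕ → S} {n : ℕ} (hπ : ∀ j < n, M.rel (π j) (π (j + 1)))
    (hρ : isPath M ρ) (h : ρ 0 = π n) :
    isPath M (fun j => if j ≤ n then π j else ρ (j - n)) := by
  intro j
  rcases lt_trichotomy j n with hj | rfl | hj
  · simpa [hj.le, Nat.succ_le_of_lt hj] using hπ j hj
  · simpa [← h] using hρ 0
  · have hρj := hρ (j - n)
    simp only [show ¬ j ≤ n by omega, show ¬ j + 1 ≤ n by omega, if_false]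
    rwa [show j + 1 - n = j - n + 1 by omega]

theorem exists_isPath (M : Kripke S) (s : S) : ∃ π, isPath M π ∧ π 0 = s := by
  choose next hnext using M.serial
  exact ⟨fun j => next^[j] s, fun j => by simpa [Function.iterate_succ_apply'] using hnext _, rfl⟩

theorem reflTransGen_of_isPath {π : ℕ → S} (hπ : isPath M π) (i : ℕ) :
    Relation.ReflTransGen M.rel (π 0) (π i) := by
  induction i with
  | zero => exact .refl
  | succ i ih => exact ih.tail (hπ i)

theorem exists_isPath_of_reflTransGen {t : S} (h : Relation.ReflTransGen M.rel s t) :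
    ∃ π i, isPath M π ∧ π 0 = s ∧ π i = t := by
  induction h using Relation.ReflTransGen.head_induction_on with
  | refl =>
    obtain ⟨π, hπ, h0⟩ := exists_isPath M t
    exact ⟨π, 0, hπ, h0, h0⟩
  | head hs _ ih =>
    obtain ⟨π, i, hπ, h0, hi⟩ := ih
    exact ⟨_, i + 1, isPath_cons hπ (h0 ▸ hs), rfl, by simpa using hi⟩

theorem sat_ag : sat M (CTL.ag a) s ↔ ∀ t, Relation.ReflTransGen M.rel s t → sat M a t := by
  simp only [CTL.ag, CTL.ef, CTL.top, sat_neg, sat, not_exists, not_and]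
  constructor
  · intro H t hst
    obtain ⟨π, i, hπ, h0, rfl⟩ := exists_isPath_of_reflTransGen hst
    by_contra ha
    exact H π hπ h0 i ha fun _ _ h => h
  · intro H π hπ h0 i ha _
    exact ha (H _ (h0 ▸ reflTransGen_of_isPath hπ i))

end Semantics

structure IsPMorphism (M₁ : Kripke S₁) (M₂ : Kripke S₂) (f : S₁ → S₂) : Prop where
  forth : ∀ a b, M₁.rel a b → M₂.rel (f a) (f b)
  back : ∀ a c, M₂.rel (f a) c → ∃ b, M₁.rel a b ∧ f b = c
  val : ∀ i a, M₂.val i (f a) ↔ M₁.val i a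

namespace IsPMorphism

variable {M₁ : Kripke S₁} {M₂ : Kripke S₂} {f : S₁ → S₂}

theorem isPath_comp (hf : IsPMorphism M₁ M₂ f) {σ : ℕ → S₁} (hσ : isPath M₁ σ) :
    isPath M₂ (f ∘ σ) :=
  fun j => hf.forth _ _ (hσ j)

theorem exists_lift_path (hf : IsPMorphism M₁ M₂ f) {π : ℕ → S₂} (hπ : isPath M₂ π) {a : S₁}
    (h0 : π 0 = f a) : ∃ σ, isPath M₁ σ ∧ σ 0 = a ∧ f ∘ σ = π := by
  choose g hg hfg using hf.back
  let σ : (j : ℕ) → {b // f b = π j} := fun j =>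
    Nat.rec ⟨a, h0.symm⟩ (fun j b => ⟨g b.1 (π (j + 1)) (by rw [b.2]; exact hπ j), hfg _ _ _⟩) j
  exact ⟨fun j => (σ j).1, fun j => hg _ _ _, rfl, funext fun j => (σ j).2⟩

theorem sat_iff (hf : IsPMorphism M₁ M₂ f) (φ : CTL) (a : S₁) : sat M₂ φ (f a) ↔ sat M₁ φ a := by
  induction φ generalizing a with
  | var i => exact hf.val i a
  | bot => exact Iff.rfl
  | imp φ ψ ihφ ihψ => exact imp_congr (ihφ a) (ihψ a)
  | ax φ ih =>
    refine ⟨fun H b hb => (ih b).1 (H _ (hf.forth _ _ hb)), fun H c hc => ?_⟩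
    obtain ⟨b, hb, rfl⟩ := hf.back _ _ hc
    exact (ih b).2 (H b hb)
  | au φ ψ ihφ ihψ =>
    constructor
    · intro H σ hσ h0
      obtain ⟨i, hi, hlt⟩ := H _ (hf.isPath_comp hσ) (by simp [h0])
      exact ⟨i, (ihψ _).1 hi, fun j hj => (ihφ _).1 (hlt j hj)⟩
    · intro H π hπ h0
      obtain ⟨σ, hσ, hσ0, rfl⟩ := hf.exists_lift_path hπ h0
      obtain ⟨i, hi, hlt⟩ := H σ hσ hσ0
      exact ⟨i, (ihψ _).2 hi, fun j hj => (ihφ _).2 (hlt j hj)⟩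
  | eu φ ψ ihφ ihψ =>
    constructor
    · rintro ⟨π, hπ, h0, i, hi, hlt⟩
      obtain ⟨σ, hσ, hσ0, rfl⟩ := hf.exists_lift_path hπ h0
      exact ⟨σ, hσ, hσ0, i, (ihψ _).1 hi, fun j hj => (ihφ _).1 (hlt j hj)⟩
    · rintro ⟨σ, hσ, h0, i, hi, hlt⟩
      exact ⟨f ∘ σ, hf.isPath_comp hσ, by simp [h0], i, (ihψ _).2 hi,
        fun j hj => (ihφ _).2 (hlt j hj)⟩

end IsPMorphism

namespace Kripke

def revalue (M : Kripke S) (v : ℕ → S → Prop) : Kripke S where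
  rel := M.rel
  serial := M.serial
  val := v

def restrict (M : Kripke S) (Q : S → Prop) (hQ : ∀ s, Q s → ∃ t, M.rel s t ∧ Q t) :
    Kripke {s // Q s} where
  rel a b := M.rel a b
  serial a := let ⟨t, hst, ht⟩ := hQ a a.2; ⟨⟨t, ht⟩, hst⟩
  val i a := M.val i a

def generated (M : Kripke S) (t : S) : Kripke {s // Relation.ReflTransGen M.rel t s} :=
  M.restrict _ fun s hs => let ⟨u, hsu⟩ := M.serial s; ⟨u, hsu, hs.tail hsu⟩

theorem isPMorphism_generated (M : Kripke S) (t : S) :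
    IsPMorphism (M.generated t) M Subtype.val where
  forth _ _ h := h
  back a c h := ⟨⟨c, a.2.tail h⟩, h, rfl⟩
  val _ _ := Iff.rfl

def guardRegion (M : Kripke S) (hser : ∀ s, M.val 0 s → ∃ t, M.rel s t ∧ M.val 0 t) :
    Kripke {s // M.val 0 s} :=
  (M.restrict _ hser).revalue fun i s => M.val (i + 1) s

theorem exists_isPath_restrict {M : Kripke S} {Q : S → Prop}
    (hQ : ∀ s, Q s → ∃ t, M.rel s t ∧ Q t) {π : ℕ → S} (hπ : isPath M π) {n : ℕ}
    (hn : ∀ j ≤ n, Q (π j)) :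
    ∃ τ, isPath (M.restrict Q hQ) τ ∧ ∀ j ≤ n, (τ j).1 = π j := by
  obtain ⟨ρ, hρ, hρ0⟩ := exists_isPath (M.restrict Q hQ) ⟨π n, hn n le_rfl⟩
  have hQπ' : ∀ j, Q (if j ≤ n then π j else (ρ (j - n)).1) := fun j => by
    split_ifs with hj
    exacts [hn j hj, (ρ _).2]
  refine ⟨fun j => ⟨_, hQπ' j⟩, isPath_append (fun j _ => hπ j) (fun j => hρ j) ?_,
    fun j hj => if_pos hj⟩
  simp [hρ0]

end Kripke

namespace CTL

def fold {α : Type*} (v : ℕ → α) (b : α) (i : α → α → α) (x : α → α) (u e : α → α → α) :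
    CTL → α
  | var n => v n
  | bot => b
  | imp φ ψ => i (fold v b i x u e φ) (fold v b i x u e ψ)
  | ax φ => x (fold v b i x u e φ)
  | au φ ψ => u (fold v b i x u e φ) (fold v b i x u e ψ)
  | eu φ ψ => e (fold v b i x u e φ) (fold v b i x u e ψ)

def substAll (v : ℕ → CTL) : CTL → CTL := fold v bot imp ax au eu

/-- Relativization to the guard variable `0`, kept fresh by shifting the formula's variables. -/
def relativize : CTL → CTL :=
  fold (fun n => var (n + 1)) bot imp (fun φ => ax (imp (var 0) φ))
    (fun φ ψ => au (imp (var 0) φ) (imp (var 0) ψ))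
    (fun φ ψ => eu (conj (var 0) φ) (conj (var 0) ψ))

end CTL

theorem sat_substAll (M : Kripke S) (v : ℕ → CTL) (φ : CTL) (s : S) :
    sat M (CTL.substAll v φ) s ↔ sat (M.revalue fun i => sat M (v i)) φ s := by
  induction φ generalizing s with
  | var i => exact Iff.rfl
  | bot => exact Iff.rfl
  | imp φ ψ ihφ ihψ => exact imp_congr (ihφ s) (ihψ s)
  | ax φ ih => exact forall₂_congr fun t _ => ih t
  | au φ ψ ihφ ihψ =>
    exact forall₃_congr fun π _ _ => exists_congr fun i =>
      and_congr (ihψ _) (forall₂_congr fun j _ => ihφ _)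
  | eu φ ψ ihφ ihψ =>
    exact exists_congr fun π => and_congr_right' <| and_congr_right' <| exists_congr fun i =>
      and_congr (ihψ _) (forall₂_congr fun j _ => ihφ _)

section Relativization

variable {N : Kripke S} (hser : ∀ s, N.val 0 s → ∃ t, N.rel s t ∧ N.val 0 t)

theorem exists_isPath_guardRegion {π : ℕ → S} (hπ : isPath N π) (h0 : N.val 0 (π 0)) :
    ∃ τ, isPath (N.guardRegion hser) τ ∧
      ∀ j, (∀ l ≤ j, N.val 0 (π l)) → (τ j).1 = π j := by
  classical
  by_cases hall : ∀ l, N.val 0 (π l)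
  · exact ⟨fun j => ⟨π j, hall j⟩, fun j => hπ j, fun _ _ => rfl⟩
  simp only [not_forall] at hall
  have hk : Nat.find hall ≠ 0 := fun hk => Nat.find_spec hall (by rwa [hk])
  obtain ⟨τ, hτ, hτπ⟩ := Kripke.exists_isPath_restrict hser hπ (n := Nat.find hall - 1)
    fun j hj => not_not.1 (Nat.find_min hall (by omega))
  refine ⟨τ, hτ, fun j hj => hτπ j ?_⟩
  by_contra hjk
  exact Nat.find_spec hall (hj _ (by omega))

theorem exists_until_of_guardRegion {P Q : S → Prop} {π : ℕ → S} (hπ : isPath N π)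
    (h0 : N.val 0 (π 0))
    (H : ∀ τ, isPath (N.guardRegion hser) τ → (τ 0).1 = π 0 →
      ∃ i, Q (τ i) ∧ ∀ j < i, P (τ j)) :
    ∃ i, (N.val 0 (π i) → Q (π i)) ∧ ∀ j < i, N.val 0 (π j) → P (π j) := by
  classical
  obtain ⟨τ, hτ, hτπ⟩ := exists_isPath_guardRegion hser hπ h0
  obtain ⟨i, hi, hlt⟩ := H τ hτ (hτπ 0 fun l hl => by rwa [Nat.le_zero.1 hl])
  by_cases hguard : ∀ l ≤ i, N.val 0 (π l)
  · refine ⟨i, fun _ => hτπ i hguard ▸ hi, fun j hj _ => ?_⟩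
    exact hτπ j (fun l hl => hguard l (by omega)) ▸ hlt j hj
  -- the path leaves the region at the first `k ≤ i`, where the guarded `Q` holds vacuously
  simp only [not_forall] at hguard
  have hk := (Nat.find_spec hguard).1
  refine ⟨Nat.find hguard, fun h => absurd h (Nat.find_spec hguard).2, fun j hj _ => ?_⟩
  have hj' : ∀ l ≤ j, N.val 0 (π l) := fun l hl => by
    by_contra h
    exact Nat.find_min hguard (by omega) ⟨by omega, h⟩
  exact hτπ j hj' ▸ hlt j (by omega)

theorem sat_relativize_iff (φ : CTL) (s : S) (hs : N.val 0 s) :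
    sat N (CTL.relativize φ) s ↔ sat (N.guardRegion hser) φ ⟨s, hs⟩ := by
  induction φ generalizing s with
  | var i => exact Iff.rfl
  | bot => exact Iff.rfl
  | imp φ ψ ihφ ihψ => exact imp_congr (ihφ s hs) (ihψ s hs)
  | ax φ ih =>
    exact ⟨fun H t hst => (ih t t.2).1 (H t hst t.2), fun H t hst ht => (ih t ht).2 (H ⟨t, ht⟩ hst)⟩
  | au φ ψ ihφ ihψ =>
    constructor
    · intro H σ hσ h0
      obtain ⟨i, hi, hlt⟩ := H (fun j => (σ j).1) hσ (by simp [h0])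
      exact ⟨i, (ihψ _ _).1 (hi (σ i).2), fun j hj => (ihφ _ _).1 (hlt j hj (σ j).2)⟩
    · intro H π hπ h0
      subst h0
      exact exists_until_of_guardRegion hser hπ hs fun τ hτ hτ0 =>
        let ⟨i, hi, hlt⟩ := H τ hτ (Subtype.ext hτ0)
        ⟨i, (ihψ _ _).2 hi, fun j hj => (ihφ _ _).2 (hlt j hj)⟩
  | eu φ ψ ihφ ihψ =>
    constructor
    · rintro ⟨π, hπ, h0, i, hi, hlt⟩
      have hguard : ∀ l ≤ i, N.val 0 (π l) := fun l hl => by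
        rcases hl.lt_or_eq with hl | rfl
        exacts [(sat_conj.1 (hlt l hl)).1, (sat_conj.1 hi).1]
      obtain ⟨τ, hτ, hτπ⟩ := Kripke.exists_isPath_restrict hser hπ hguard
      refine ⟨τ, hτ, Subtype.ext ((hτπ 0 i.zero_le).trans h0), i,
        (ihψ _ _).1 (hτπ i le_rfl ▸ (sat_conj.1 hi).2), fun j hj => ?_⟩
      exact (ihφ _ _).1 (hτπ j hj.le ▸ (sat_conj.1 (hlt j hj)).2)
    · rintro ⟨σ, hσ, h0, i, hi, hlt⟩
      refine ⟨fun j => (σ j).1, hσ, by simp [h0], i, ?_, fun j hj => ?_⟩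
      · exact sat_conj.2 ⟨(σ i).2, (ihψ _ _).2 hi⟩
      · exact sat_conj.2 ⟨(σ j).2, (ihφ _ _).2 (hlt j hj)⟩

end Relativization

theorem satisfiable_of_sat_theta_relativize {N : Kripke S} {t : S} {φ : CTL}
    (h : sat N (CTL.conj (Theta 0) (CTL.relativize φ)) t) : satisfiable φ := by
  obtain ⟨hΘ, hφ⟩ := sat_conj.1 h
  obtain ⟨ht, hag⟩ := sat_conj.1 hΘ
  have hser (s) (hs : (N.generated t).val 0 s) :
      ∃ u, (N.generated t).rel s u ∧ (N.generated t).val 0 u := by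
    obtain ⟨u, hsu, hu⟩ := sat_ex.1 ((sat_iffc.1 (sat_ag.1 hag s s.2)).2 hs)
    exact ⟨⟨u, s.2.tail hsu⟩, hsu, hu⟩
  have hφ' := ((Kripke.isPMorphism_generated N t).sat_iff _ ⟨t, .refl⟩).1 hφ
  exact ⟨_, _, _, (sat_relativize_iff hser φ ⟨t, .refl⟩ ht).1 hφ'⟩

/-- For each `m`, the states `(m, j)` form a chain: `p` holds at the even `j ≤ 2m`, the
path `(m, 0) → (m, 1) → ⋯ → (m, 2m)` ends in a loop, and `(m, 0)` has a second successor
`(m, 2m + 1)`, a `¬p` loop. For `m ≥ 1`, `(m, 0)` is then the only state satisfying `A_m`. -/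
def chains : Kripke (ℕ × ℕ) where
  rel c d := d.1 = c.1 ∧
    (c.2 < 2 * c.1 ∧ d.2 = c.2 + 1 ∨ c.2 = 0 ∧ d.2 = 2 * c.1 + 1 ∨ 2 * c.1 ≤ c.2 ∧ d.2 = c.2)
  serial c := by
    by_cases h : c.2 < 2 * c.1
    exacts [⟨(c.1, c.2 + 1), rfl, .inl ⟨h, rfl⟩⟩, ⟨c, rfl, .inr (.inr ⟨by omega, rfl⟩)⟩]
  val _ c := c.2 ≤ 2 * c.1 ∧ Even c.2

namespace chains

theorem eq_of_reflTransGen_loop {c d : ℕ × ℕ} (hc : 2 * c.1 ≤ c.2) (hc₀ : 0 < c.2)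
    (h : Relation.ReflTransGen chains.rel c d) : d = c := by
  induction h with
  | refl => rfl
  | tail _ hde ih =>
    subst ih
    obtain ⟨h1, h2 | h2 | h2⟩ := hde <;> first | omega | exact Prod.ext h1 h2.2

theorem sat_chi_of_add_eq {k i m : ℕ} (hm : 0 < m) (h : i + k = m) :
    sat chains (chi k) (m, 2 * i) := by
  induction k generalizing i with
  | zero =>
    refine sat_ag.2 fun d hd => ?_
    rw [eq_of_reflTransGen_loop (by simp; omega) (by simp; omega) hd]
    exact ⟨by simp; omega, even_two_mul i⟩
  | succ k ih =>
    refine sat_conj.2 ⟨⟨by simp; omega, even_two_mul i⟩, sat_ex.2 ⟨(m, 2 * i + 1),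
      ⟨rfl, .inl ⟨by simp; omega, rfl⟩⟩, sat_conj.2 ⟨fun h => ?_, sat_ex.2 ⟨(m, 2 * (i + 1)),
      ⟨rfl, .inl ⟨by simp; omega, by simp; omega⟩⟩, ih (by omega)⟩⟩⟩⟩
    exact Nat.not_even_two_mul_add_one i h.2

theorem exists_of_sat_chi {k : ℕ} {c : ℕ × ℕ} (h : sat chains (chi k) c) :
    ∃ i, c.2 = 2 * i ∧ i + k = c.1 := by
  induction k generalizing c with
  | zero =>
    have hag := sat_ag.1 h
    obtain ⟨hc, r, hr⟩ := hag c .refl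
    refine ⟨r, by omega, ?_⟩
    by_contra hlt
    obtain ⟨-, r', hr'⟩ := hag (c.1, c.2 + 1) (.single ⟨rfl, .inl ⟨by omega, rfl⟩⟩)
    omega
  | succ k ih =>
    obtain ⟨⟨hc, r, hr⟩, hex⟩ := sat_conj.1 h
    obtain ⟨u, ⟨hu1, hcu⟩, hu⟩ := sat_ex.1 hex
    obtain ⟨hnp, hex'⟩ := sat_conj.1 hu
    obtain ⟨v, ⟨hv1, huv⟩, hv⟩ := sat_ex.1 hex'
    obtain ⟨i, hi, hik⟩ := ih hv
    have hu : ¬ (u.2 ≤ 2 * u.1 ∧ Even u.2) := hnp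
    refine ⟨r, by omega, ?_⟩
    rcases hcu with hcu | hcu | hcu
    · rcases huv with huv | huv | huv <;> omega
    · rcases huv with huv | huv | huv <;> omega
    · exact (hu ⟨by omega, r, by omega⟩).elim

theorem sat_Aform_iff {k : ℕ} {c : ℕ × ℕ} : sat chains (Aform (k + 1)) c ↔ c = (k + 1, 0) := by
  constructor
  · intro h
    obtain ⟨hchi, hex⟩ := sat_conj.1 h
    obtain ⟨i, hi, hik⟩ := exists_of_sat_chi hchi
    obtain ⟨u, ⟨hu1, hcu⟩, hag⟩ := sat_ex.1 hex
    rcases hcu with hcu | hcu | hcu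
    · have hp := sat_ag.1 hag (u.1, u.2 + 1) (.single ⟨rfl, .inl ⟨by omega, rfl⟩⟩)
      exact (hp ⟨by simp; omega, i + 1, by simp; omega⟩).elim
    · exact Prod.ext (by omega) hcu.1
    · omega
  · rintro rfl
    refine sat_conj.2 ⟨by simpa using sat_chi_of_add_eq (i := 0) (k := k + 1) (by omega) rfl,
      sat_ex.2 ⟨(k + 1, 2 * (k + 1) + 1), ⟨rfl, .inr (.inl ⟨rfl, rfl⟩)⟩, sat_ag.2 fun d hd => ?_⟩⟩
    rw [eq_of_reflTransGen_loop (by simp) (by simp) hd]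
    exact fun hp => Nat.not_even_two_mul_add_one _ hp.2

theorem not_sat_Bform (k : ℕ) (c : ℕ × ℕ) : ¬ sat chains (Bform (k + 1)) c := fun h => by
  obtain ⟨u, ⟨hu1, hcu⟩, hA⟩ := sat_ex.1 h
  rw [sat_Aform_iff] at hA
  subst hA
  omega

end chains

def Kripke.attachChains (M : Kripke S) (W : ℕ → S → Prop) : Kripke (S ⊕ ℕ × ℕ) where
  rel
    | .inl s, .inl t => M.rel s t
    | .inl s, .inr c => ∃ k, W k s ∧ c = (k + 1, 0)
    | .inr _, .inl _ => False
    | .inr c, .inr d => chains.rel c d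
  serial
    | .inl s => let ⟨t, hst⟩ := M.serial s; ⟨.inl t, hst⟩
    | .inr c => let ⟨d, hcd⟩ := chains.serial c; ⟨.inr d, hcd⟩
  val
    | _, .inl _ => False
    | i, .inr c => chains.val i c

namespace Kripke.attachChains

variable (M : Kripke S) (W : ℕ → S → Prop)

theorem isPMorphism_inr : IsPMorphism chains (M.attachChains W) Sum.inr where
  forth _ _ h := h
  back
    | _, .inl _, h => h.elim
    | _, .inr d, h => ⟨d, h, rfl⟩
  val _ _ := Iff.rfl

theorem sat_Bform_inl (k : ℕ) (s : S) :
    sat (M.attachChains W) (Bform (k + 1)) (.inl s) ↔ W k s := by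
  constructor
  · intro h
    obtain ⟨u, hsu, hA⟩ := sat_ex.1 h
    rcases u with t | c
    · exact ((sat_conj.1 (sat_conj.1 hA).1).1).elim
    · obtain ⟨k', hk', rfl⟩ := hsu
      rw [(isPMorphism_inr M W).sat_iff, chains.sat_Aform_iff] at hA
      cases hA
      exact hk'
  · intro h
    exact sat_ex.2 ⟨.inr (k + 1, 0), ⟨k, h, rfl⟩,
      ((isPMorphism_inr M W).sat_iff _ _).2 (chains.sat_Aform_iff.2 rfl)⟩

theorem not_sat_Bform_inr (k : ℕ) (c : ℕ × ℕ) :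
    ¬ sat (M.attachChains W) (Bform (k + 1)) (.inr c) := by
  rw [(isPMorphism_inr M W).sat_iff]
  exact chains.not_sat_Bform k c

end Kripke.attachChains

def Kripke.guardedVal (M : Kripke S) : ℕ → S → Prop
  | 0, _ => True
  | n + 1, s => M.val n s

/-- `σ(Θ ∧ φ')` with `σ : i ↦ B_(i+1)`; the guard `0` of `φ'` becomes `B_1`. -/
def singleVarEmbedding (φ : CTL) : CTL :=
  CTL.substAll (fun i => Bform (i + 1)) (CTL.conj (Theta 0) (CTL.relativize φ))

theorem sat_singleVarEmbedding {M : Kripke S} {φ : CTL} {s : S} (h : sat M φ s) :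
    sat (M.attachChains M.guardedVal) (singleVarEmbedding φ) (.inl s) := by
  set G := M.attachChains M.guardedVal
  set N := G.revalue fun i => sat G (Bform (i + 1))
  have hinl : ∀ i s, N.val i (.inl s) ↔ M.guardedVal i s :=
    Kripke.attachChains.sat_Bform_inl M _
  have hinr : ∀ c, ¬ N.val 0 (.inr c) := Kripke.attachChains.not_sat_Bform_inr M _ 0
  have hser : ∀ w, N.val 0 w → ∃ u, N.rel w u ∧ N.val 0 u
    | .inl s, _ => let ⟨t, hst⟩ := M.serial s; ⟨.inl t, hst, (hinl 0 t).2 trivial⟩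
    | .inr c, hc => (hinr c hc).elim
  have hf : IsPMorphism M (N.guardRegion hser) fun s => ⟨.inl s, (hinl 0 s).2 trivial⟩ :=
    { forth := fun _ _ h => h
      back := fun
        | _, ⟨.inl t, _⟩, h => ⟨t, h, rfl⟩
        | _, ⟨.inr c, hc⟩, _ => (hinr c hc).elim
      val := fun i s => hinl (i + 1) s }
  have hΘ : sat N (Theta 0) (.inl s) := by
    refine sat_conj.2 ⟨(hinl 0 s).2 trivial, sat_ag.2 fun w _ => sat_iffc.2 ?_⟩
    rw [sat_ex]
    rcases w with t | c
    · exact ⟨fun _ => (hinl 0 t).2 trivial, fun ht => hser _ ht⟩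
    · refine ⟨fun ⟨u, hcu, hu⟩ => ?_, fun hc => (hinr c hc).elim⟩
      rcases u with t | d
      exacts [hcu.elim, (hinr d hu).elim]
  rw [singleVarEmbedding, sat_substAll]
  exact sat_conj.2 ⟨hΘ, (sat_relativize_iff hser φ _ _).2 ((hf.sat_iff φ s).2 h)⟩

theorem satisfiable_singleVarEmbedding_iff (φ : CTL) :
    satisfiable (singleVarEmbedding φ) ↔ satisfiable φ :=
  ⟨fun ⟨_, N, _, h⟩ => satisfiable_of_sat_theta_relativize ((sat_substAll N _ _ _).1 h),
    fun ⟨_, _, _, h⟩ => ⟨_, _, _, sat_singleVarEmbedding h⟩⟩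

theorem occurs_substAll {v : ℕ → CTL} {q : ℕ} {φ : CTL} (h : occurs q (CTL.substAll v φ)) :
    ∃ i, occurs q (v i) := by
  induction φ with
  | var i => exact ⟨i, h⟩
  | bot => exact h.elim
  | ax φ ih => exact ih h
  | imp φ ψ ihφ ihψ | au φ ψ ihφ ihψ | eu φ ψ ihφ ihψ => exact h.elim ihφ ihψ

theorem occurs_Bform {q m : ℕ} (h : occurs q (Bform m)) : q = 0 := by
  have occurs_chi : ∀ k, occurs q (chi k) → q = 0 := fun k => by
    induction k <;> simp [chi, CTL.conj, CTL.neg, CTL.ex, CTL.ag, CTL.ef, CTL.top, occurs] <;>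
      grind
  simp only [Bform, Aform, CTL.conj, CTL.neg, CTL.ex, CTL.ag, CTL.ef, CTL.top, occurs] at h
  grind

theorem occurs_singleVarEmbedding {q : ℕ} {φ : CTL} (h : occurs q (singleVarEmbedding φ)) :
    q = 0 :=
  let ⟨_, hi⟩ := occurs_substAll h
  occurs_Bform hi

theorem Nat.lt_pair_of_pos {t : ℕ} (a : ℕ) (ht : 0 < t) : a < Nat.pair t a :=
  (Nat.right_le_pair 0 a).trans_lt (Nat.pair_lt_pair_left a ht)

theorem Nat.left_lt_pair_pair {t : ℕ} (a b : ℕ) (ht : 0 < t) : a < Nat.pair t (Nat.pair a b) :=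
  (Nat.left_le_pair a b).trans_lt (Nat.lt_pair_of_pos _ ht)

theorem Nat.right_lt_pair_pair {t : ℕ} (a b : ℕ) (ht : 0 < t) : b < Nat.pair t (Nat.pair a b) :=
  (Nat.right_le_pair a b).trans_lt (Nat.lt_pair_of_pos _ ht)

namespace CTL

def codeVar (n : ℕ) : ℕ := Nat.pair 0 n
def codeBot : ℕ := Nat.pair 1 0
def codeImp (a b : ℕ) : ℕ := Nat.pair 2 (Nat.pair a b)
def codeAx (a : ℕ) : ℕ := Nat.pair 3 a
def codeAu (a b : ℕ) : ℕ := Nat.pair 4 (Nat.pair a b)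
def codeEu (a b : ℕ) : ℕ := Nat.pair 5 (Nat.pair a b)
def codeNeg (a : ℕ) : ℕ := codeImp a codeBot
def codeConj (a b : ℕ) : ℕ := codeNeg (codeImp a (codeNeg b))
def codeEx (a : ℕ) : ℕ := codeNeg (codeAx (codeNeg a))

theorem primrec_codeVar : Primrec codeVar := Primrec₂.natPair.comp (.const 0) .id
theorem primrec₂_codeImp : Primrec₂ codeImp := Primrec₂.natPair.comp (.const 2) Primrec₂.natPair
theorem primrec_codeAx : Primrec codeAx := Primrec₂.natPair.comp (.const 3) .id
theorem primrec₂_codeAu : Primrec₂ codeAu := Primrec₂.natPair.comp (.const 4) Primrec₂.natPair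
theorem primrec₂_codeEu : Primrec₂ codeEu := Primrec₂.natPair.comp (.const 5) Primrec₂.natPair
theorem primrec_codeNeg : Primrec codeNeg := primrec₂_codeImp.comp .id (.const _)
theorem primrec₂_codeConj : Primrec₂ codeConj :=
  primrec_codeNeg.comp (primrec₂_codeImp.comp .fst (primrec_codeNeg.comp .snd))
theorem primrec_codeEx : Primrec codeEx :=
  primrec_codeNeg.comp (primrec_codeAx.comp primrec_codeNeg)

section CodeFold

variable (v : ℕ → ℕ) (b : ℕ) (i : ℕ → ℕ → ℕ) (x : ℕ → ℕ) (u e : ℕ → ℕ → ℕ)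

/-- One layer of `fold` on codes; `r` supplies the values at the immediate subcodes. -/
def codeFoldStep (r : ℕ → ℕ) (m : ℕ) : ℕ :=
  let c := m.unpair.2
  [v c, b, i (r c.unpair.1) (r c.unpair.2), x (r c), u (r c.unpair.1) (r c.unpair.2),
    e (r c.unpair.1) (r c.unpair.2)].getD m.unpair.1 0

def codeFold (m : ℕ) : ℕ :=
  codeFoldStep v b i x u e (fun k => if k < m then codeFold k else 0) m

variable {v b i x u e} in
theorem codeFold_encodeCTL {V : ℕ → CTL} {B : CTL} {I U E : CTL → CTL → CTL} {X : CTL → CTL}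
    (hv : ∀ n, v n = encodeCTL (V n)) (hb : b = encodeCTL B)
    (hi : ∀ φ ψ, i (encodeCTL φ) (encodeCTL ψ) = encodeCTL (I φ ψ))
    (hx : ∀ φ, x (encodeCTL φ) = encodeCTL (X φ))
    (hu : ∀ φ ψ, u (encodeCTL φ) (encodeCTL ψ) = encodeCTL (U φ ψ))
    (he : ∀ φ ψ, e (encodeCTL φ) (encodeCTL ψ) = encodeCTL (E φ ψ)) (φ : CTL) :
    codeFold v b i x u e (encodeCTL φ) = encodeCTL (fold V B I X U E φ) := by
  subst hb
  induction φ <;> rw [codeFold] <;>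
    simp [codeFoldStep, encodeCTL, fold, Nat.lt_pair_of_pos,
      Nat.left_lt_pair_pair, Nat.right_lt_pair_pair, *]

variable {v i x u e} in
theorem primrec_codeFold (hv : Primrec v) (hi : Primrec₂ i) (hx : Primrec x) (hu : Primrec₂ u)
    (he : Primrec₂ e) : Primrec (codeFold v b i x u e) := by
  open Primrec in
  have hstep : Primrec fun l : List ℕ => codeFoldStep v b i x u e (l.getD · 0) l.length := by
    have hm : Primrec fun l : List ℕ => l.length := list_length
    have hc := snd.comp (unpair.comp hm)
    have hc₁ := fst.comp (unpair.comp hc)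
    have hc₂ := snd.comp (unpair.comp hc)
    have hr : ∀ {g : List ℕ → ℕ}, Primrec g → Primrec fun l : List ℕ => l.getD (g l) 0 :=
      fun hg => (list_getD 0).comp .id hg
    exact (list_getD 0).comp
      (list_cons.comp (hv.comp hc) <| list_cons.comp (const b) <|
        list_cons.comp (hi.comp (hr hc₁) (hr hc₂)) <| list_cons.comp (hx.comp (hr hc)) <|
        list_cons.comp (hu.comp (hr hc₁) (hr hc₂)) <|
        list_cons.comp (he.comp (hr hc₁) (hr hc₂)) (const []))
      (fst.comp (unpair.comp hm))
  refine (nat_strong_rec (fun (_ : Unit) => codeFold v b i x u e)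
    (option_some.comp (hstep.comp snd)).to₂ fun _ n => ?_).comp (const ()) .id
  simp only [List.length_map, List.length_range, Option.some.injEq]
  rw [codeFold]
  congr 1
  funext k
  split_ifs with hk <;> simp [List.getD_eq_getElem?_getD, hk]

end CodeFold

def PrimrecOnCodes (F : CTL → CTL) : Prop :=
  ∃ f : ℕ → ℕ, Primrec f ∧ ∀ φ, f (encodeCTL φ) = encodeCTL (F φ)

theorem PrimrecOnCodes.comp {F G : CTL → CTL} (hF : PrimrecOnCodes F) (hG : PrimrecOnCodes G) :
    PrimrecOnCodes (F ∘ G) :=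
  let ⟨f, hf, hfF⟩ := hF
  let ⟨g, hg, hgG⟩ := hG
  ⟨f ∘ g, hf.comp hg, fun φ => by simp [hgG, hfF]⟩

theorem primrecOnCodes_conj (ψ : CTL) : PrimrecOnCodes (conj ψ) :=
  ⟨codeConj (encodeCTL ψ), primrec₂_codeConj.comp (.const _) .id, fun _ => rfl⟩

theorem primrecOnCodes_substAll {v : ℕ → CTL} (hv : Primrec fun n => encodeCTL (v n)) :
    PrimrecOnCodes (substAll v) :=
  ⟨_, primrec_codeFold codeBot hv primrec₂_codeImp primrec_codeAx primrec₂_codeAu primrec₂_codeEu,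
    codeFold_encodeCTL (fun _ => rfl) rfl (fun _ _ => rfl) (fun _ => rfl) (fun _ _ => rfl)
      (fun _ _ => rfl)⟩

theorem primrecOnCodes_relativize : PrimrecOnCodes relativize := by
  have hguard : ∀ {c : ℕ → ℕ → ℕ} {g : ℕ × ℕ → ℕ}, Primrec₂ c → Primrec g →
      Primrec fun p => c (codeVar 0) (g p) := fun hc hg => hc.comp (.const _) hg
  refine ⟨codeFold (fun n => codeVar (n + 1)) codeBot codeImp
    (fun a => codeAx (codeImp (codeVar 0) a))
    (fun a b => codeAu (codeImp (codeVar 0) a) (codeImp (codeVar 0) b))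
    (fun a b => codeEu (codeConj (codeVar 0) a) (codeConj (codeVar 0) b)),
    primrec_codeFold _ (primrec_codeVar.comp .succ) primrec₂_codeImp
      (primrec_codeAx.comp (primrec₂_codeImp.comp (.const _) .id))
      (primrec₂_codeAu.comp (hguard primrec₂_codeImp .fst) (hguard primrec₂_codeImp .snd))
      (primrec₂_codeEu.comp (hguard primrec₂_codeConj .fst) (hguard primrec₂_codeConj .snd)),
    codeFold_encodeCTL (fun _ => rfl) rfl (fun _ _ => rfl) (fun _ => rfl) (fun _ _ => rfl)
      (fun _ _ => rfl)⟩

end CTL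

theorem primrec_encodeCTL_Bform : Primrec fun m => encodeCTL (Bform m) := by
  open CTL Primrec in
  have hchi : Primrec fun k => encodeCTL (chi k) := by
    have hstep : Primrec fun c =>
        codeConj (codeVar 0) (codeEx (codeConj (codeNeg (codeVar 0)) (codeEx c))) :=
      primrec₂_codeConj.comp (const _)
        (primrec_codeEx.comp (primrec₂_codeConj.comp (const _) primrec_codeEx))
    refine (nat_rec₁ (encodeCTL (chi 0)) (hstep.comp snd).to₂).of_eq fun k => ?_
    induction k with
    | zero => rfl
    | succ k ih => simp only [ih]; rfl
  exact (primrec_codeEx.comp (primrec₂_codeConj.comp hchi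
    (const (encodeCTL (ex (ag (neg (var 0)))))))).of_eq fun _ => rfl

theorem primrecOnCodes_singleVarEmbedding : CTL.PrimrecOnCodes singleVarEmbedding :=
  ((CTL.primrecOnCodes_substAll (primrec_encodeCTL_Bform.comp .succ)).comp
    (CTL.primrecOnCodes_conj _)).comp CTL.primrecOnCodes_relativize

/-- There is a computable function e mapping every CTL formula φ to a formula
e(φ) in at most one propositional variable (the variable p = var 0) such that
e(φ) is satisfiable iff φ is satisfiable. -/
theorem ctl_single_variable_embedding :
    ∃ (e : CTL → CTL) (f : ℕ → ℕ), Computable f ∧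
      (∀ φ, f (encodeCTL φ) = encodeCTL (e φ)) ∧
      (∀ φ, (∀ q, occurs q (e φ) → q = 0) ∧ (satisfiable (e φ) ↔ satisfiable φ)) := by
  obtain ⟨f, hf, hfe⟩ := primrecOnCodes_singleVarEmbedding
  exact ⟨singleVarEmbedding, f, hf.to_comp, hfe, fun φ =>
    ⟨fun _ => occurs_singleVarEmbedding, satisfiable_singleVarEmbedding_iff φ⟩⟩
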